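/- arXiv:1310.8277 — 3 statements merged into one kernel-verified Lean document; each statement's English description precedes it below -/
import Mathlib

section
/- Let K = (k_1, ..., k_r) be a sequence of positive integers with place values b_1 = 1, b_{q+1} = 1 + k_q b_q. Define F on the set R of tuples (i_r, i_{r-1}, ..., i_{r-q}) (with 0 ≤ q ≤ r-1 and 0 ≤ i_x ≤ k_x - 1 for each x) by F((i_r, ..., i_{r-q})) = i_r b_r + i_{r-1} b_{r-1} + ... + i_{r-q} b_{r-q} + q. Then F is injective. -/
/-- Telescoping key bound: the tail of the digit expansion plus its length
plus the place value at the end is at most the place value at the start. -/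
lemma key_lemma (r : ℕ) (k b : ℕ → ℕ)
    (hrec : ∀ q, 1 ≤ q → q ≤ r → b (q + 1) = 1 + k q * b q) :
    ∀ (n j0 : ℕ) (f : ℕ → ℕ), j0 + n + 1 ≤ r →
      (∀ t, 1 ≤ t → t ≤ n → f (j0 + t) < k (r - (j0 + t))) →
      (∑ t ∈ Finset.range n, f (j0 + 1 + t) * b (r - (j0 + 1 + t))) + n + b (r - (j0 + n))
        ≤ b (r - j0) := by
  intro n
  induction n with
  | zero => intro j0 f h hf; simp
  | succ n ih =>
    intro j0 f h hf
    rw [Finset.sum_range_succ]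
    have he : j0 + 1 + n = j0 + (n + 1) := by omega
    rw [he]
    have hx : r - (j0 + (n + 1)) + 1 = r - (j0 + n) := by omega
    have hrec' := hrec (r - (j0 + (n + 1))) (by omega) (by omega)
    rw [hx] at hrec'
    have hd : f (j0 + (n + 1)) + 1 ≤ k (r - (j0 + (n + 1))) :=
      hf (n + 1) (by omega) le_rfl
    have hmul : (f (j0 + (n + 1)) + 1) * b (r - (j0 + (n + 1)))
        ≤ k (r - (j0 + (n + 1))) * b (r - (j0 + (n + 1))) :=
      Nat.mul_le_mul_right _ hd
    have step : f (j0 + (n + 1)) * b (r - (j0 + (n + 1))) + 1 + b (r - (j0 + (n + 1)))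
        ≤ b (r - (j0 + n)) := by
      rw [hrec']
      nlinarith [hmul]
    have ihr := ih j0 f (by omega) (fun t ht1 ht2 => hf t ht1 (by omega))
    linarith [step, ihr]

/-- Positivity of the place values. -/
lemma b_pos (r : ℕ) (k b : ℕ → ℕ)
    (hb1 : b 1 = 1)
    (hrec : ∀ q, 1 ≤ q → q ≤ r → b (q + 1) = 1 + k q * b q) :
    ∀ x, 1 ≤ x → x ≤ r + 1 → 1 ≤ b x := by
  intro x hx1 hx2
  rcases Nat.lt_or_ge x 2 with h | h
  · have hx : x = 1 := by omega
    rw [hx, hb1]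
  · have : x = (x - 1) + 1 := by omega
    rw [this, hrec (x - 1) (by omega) (by omega)]
    omega

/-- If the digits agree up to the shorter length and the lengths differ,
the values differ (strictly). -/
lemma lt_len (r : ℕ) (k b : ℕ → ℕ)
    (q1 q2 : ℕ) (hq2 : q2 < r) (f g : ℕ → ℕ)
    (hagree : ∀ j, j ≤ q1 → f j = g j) (hlt : q1 < q2) :
    (∑ j ∈ Finset.range (q1 + 1), f j * b (r - j)) + q1 <
      (∑ j ∈ Finset.range (q2 + 1), g j * b (r - j)) + q2 := by
  have h1 : (∑ j ∈ Finset.range (q1 + 1), f j * b (r - j))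
      = ∑ j ∈ Finset.range (q1 + 1), g j * b (r - j) := by
    apply Finset.sum_congr rfl
    intro j hj
    rw [hagree j (by simpa using Nat.lt_succ_iff.mp (Finset.mem_range.mp hj))]
  have h2 : (∑ j ∈ Finset.range (q1 + 1), g j * b (r - j))
      ≤ ∑ j ∈ Finset.range (q2 + 1), g j * b (r - j) := by
    apply Finset.sum_le_sum_of_subset
    exact Finset.range_subset_range.mpr (by omega)
  omega

/-- If the digits first differ at position `j0` with `f j0 < g j0`,
the values satisfy a strict inequality. -/
lemma lt_dig (r : ℕ) (k b : ℕ → ℕ)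
    (hk : ∀ x, 1 ≤ x → x ≤ r → 1 ≤ k x)
    (hb1 : b 1 = 1)
    (hrec : ∀ q, 1 ≤ q → q ≤ r → b (q + 1) = 1 + k q * b q)
    (q1 q2 : ℕ) (hq1 : q1 < r) (hq2 : q2 < r) (f g : ℕ → ℕ)
    (hf : ∀ j, j ≤ q1 → f j < k (r - j))
    (j0 : ℕ) (hj01 : j0 ≤ q1) (hj02 : j0 ≤ q2)
    (hagree : ∀ j, j < j0 → f j = g j) (hlt : f j0 < g j0) :
    (∑ j ∈ Finset.range (q1 + 1), f j * b (r - j)) + q1 <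
      (∑ j ∈ Finset.range (q2 + 1), g j * b (r - j)) + q2 := by
  -- split the sums at j0
  have split1 : (∑ j ∈ Finset.range (q1 + 1), f j * b (r - j))
      = (∑ j ∈ Finset.range j0, f j * b (r - j)) + f j0 * b (r - j0)
        + ∑ j ∈ Finset.Ico (j0 + 1) (q1 + 1), f j * b (r - j) := by
    rw [Finset.range_eq_Ico, ← Finset.sum_Ico_consecutive _ (Nat.zero_le (j0 + 1)) (by omega),
      Finset.sum_Ico_succ_top (Nat.zero_le j0), ← Finset.range_eq_Ico]
  have split2 : (∑ j ∈ Finset.range (q2 + 1), g j * b (r - j))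
      = (∑ j ∈ Finset.range j0, g j * b (r - j)) + g j0 * b (r - j0)
        + ∑ j ∈ Finset.Ico (j0 + 1) (q2 + 1), g j * b (r - j) := by
    rw [Finset.range_eq_Ico, ← Finset.sum_Ico_consecutive _ (Nat.zero_le (j0 + 1)) (by omega),
      Finset.sum_Ico_succ_top (Nat.zero_le j0), ← Finset.range_eq_Ico]
  have hA : (∑ j ∈ Finset.range j0, f j * b (r - j))
      = ∑ j ∈ Finset.range j0, g j * b (r - j) := by
    apply Finset.sum_congr rfl
    intro j hj
    rw [hagree j (Finset.mem_range.mp hj)]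
  -- bound the tail of the first sum
  have htail : (∑ j ∈ Finset.Ico (j0 + 1) (q1 + 1), f j * b (r - j))
      = ∑ t ∈ Finset.range (q1 - j0), f (j0 + 1 + t) * b (r - (j0 + 1 + t)) := by
    rw [Finset.sum_Ico_eq_sum_range]
    have : q1 + 1 - (j0 + 1) = q1 - j0 := by omega
    rw [this]
  have hkey := key_lemma r k b hrec (q1 - j0) j0 f (by omega)
    (fun t ht1 ht2 => hf (j0 + t) (by omega))
  have hend : j0 + (q1 - j0) = q1 := by omega
  rw [hend] at hkey
  have hbq1 : 1 ≤ b (r - q1) := b_pos r k b hb1 hrec (r - q1) (by omega) (by omega)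
  -- so tail + (q1 - j0) + 1 ≤ b (r - j0)
  have hT : (∑ j ∈ Finset.Ico (j0 + 1) (q1 + 1), f j * b (r - j)) + q1 + 1
      ≤ b (r - j0) + j0 := by
    rw [htail]; omega
  -- digit inequality
  have hbj0 : (f j0 + 1) * b (r - j0) ≤ g j0 * b (r - j0) :=
    Nat.mul_le_mul_right _ hlt
  have hbj0' : f j0 * b (r - j0) + b (r - j0) ≤ g j0 * b (r - j0) := by
    nlinarith [hbj0]
  rw [split1, split2, hA]
  omega

/-- Equality of values forces equality of lengths and digits. -/
lemma aux_eq (r : ℕ) (k b : ℕ → ℕ)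
    (hk : ∀ x, 1 ≤ x → x ≤ r → 1 ≤ k x)
    (hb1 : b 1 = 1)
    (hrec : ∀ q, 1 ≤ q → q ≤ r → b (q + 1) = 1 + k q * b q)
    (q1 q2 : ℕ) (hq1 : q1 < r) (hq2 : q2 < r) (f g : ℕ → ℕ)
    (hf : ∀ j, j ≤ q1 → f j < k (r - j))
    (hg : ∀ j, j ≤ q2 → g j < k (r - j))
    (h : (∑ j ∈ Finset.range (q1 + 1), f j * b (r - j)) + q1 =
      (∑ j ∈ Finset.range (q2 + 1), g j * b (r - j)) + q2) :
    q1 = q2 ∧ ∀ j, j ≤ q1 → f j = g j := by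
  by_cases hex : ∃ j, j ≤ q1 ∧ j ≤ q2 ∧ f j ≠ g j
  · exfalso
    classical
    obtain ⟨⟨hj1, hj2, hne⟩, hmin⟩ := Nat.find_spec hex, fun j hj => Nat.find_min hex hj
    set j0 := Nat.find hex with hj0def
    have hagree : ∀ j, j < j0 → f j = g j := by
      intro j hj
      by_contra hne'
      exact (Nat.find_min hex hj) ⟨by omega, by omega, hne'⟩
    rcases Nat.lt_or_ge (f j0) (g j0) with hlt | hge
    · have := lt_dig r k b hk hb1 hrec q1 q2 hq1 hq2 f g hf j0 hj1 hj2 hagree hlt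
      omega
    · have hlt : g j0 < f j0 := by omega
      have := lt_dig r k b hk hb1 hrec q2 q1 hq2 hq1 g f hg j0 hj2 hj1
        (fun j hj => (hagree j hj).symm) hlt
      omega
  · push_neg at hex
    have hagree : ∀ j, j ≤ q1 → j ≤ q2 → f j = g j := hex
    have hq : q1 = q2 := by
      by_contra hne
      rcases Nat.lt_or_ge q1 q2 with hlt | hge
      · have := lt_len r k b q1 q2 hq2 f g (fun j hj => hagree j hj (by omega)) hlt
        omega
      · have hlt : q2 < q1 := by omega
        have := lt_len r k b q2 q1 hq1 g f (fun j hj => (hagree j (by omega) hj).symm) hlt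
        omega
    exact ⟨hq, fun j hj => hagree j hj (by omega)⟩

/-- Theorem 3.1: the value function
`F (i_r, ..., i_{r-q}) = i_r b_r + ⋯ + i_{r-q} b_{r-q} + q` on the set of
admissible tuples is injective. -/
theorem stmt_7 (r : ℕ) (k b : ℕ → ℕ)
    (hk : ∀ x, 1 ≤ x → x ≤ r → 1 ≤ k x)
    (hb1 : b 1 = 1)
    (hrec : ∀ q, 1 ≤ q → q ≤ r → b (q + 1) = 1 + k q * b q) :
    Function.Injective
      (fun T : Σ q : Fin r, (∀ j : Fin (q.1 + 1), Fin (k (r - j.1))) =>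
        (∑ j : Fin (T.1.1 + 1), (T.2 j).1 * b (r - j.1)) + T.1.1) := by
  rintro ⟨qf1, f⟩ ⟨qf2, g⟩ h
  simp only at h
  classical
  obtain ⟨q1, hq1⟩ : ∃ q1, qf1.1 = q1 := ⟨qf1.1, rfl⟩
  obtain ⟨q2, hq2⟩ : ∃ q2, qf2.1 = q2 := ⟨qf2.1, rfl⟩
  have hq1r : q1 < r := hq1 ▸ qf1.isLt
  have hq2r : q2 < r := hq2 ▸ qf2.isLt
  set f' : ℕ → ℕ := fun j => if hj : j < q1 + 1 then (f ⟨j, hq1 ▸ hj⟩).1 else 0 with hf'def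
  set g' : ℕ → ℕ := fun j => if hj : j < q2 + 1 then (g ⟨j, hq2 ▸ hj⟩).1 else 0 with hg'def
  have hsum1 : (∑ j : Fin (qf1.1 + 1), (f j).1 * b (r - j.1))
      = ∑ j ∈ Finset.range (q1 + 1), f' j * b (r - j) := by
    subst hq1
    rw [← Fin.sum_univ_eq_sum_range (fun j => f' j * b (r - j))]
    apply Finset.sum_congr rfl
    intro j _
    simp only [hf'def, dif_pos j.isLt]
  have hsum2 : (∑ j : Fin (qf2.1 + 1), (g j).1 * b (r - j.1))
      = ∑ j ∈ Finset.range (q2 + 1), g' j * b (r - j) := by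
    subst hq2
    rw [← Fin.sum_univ_eq_sum_range (fun j => g' j * b (r - j))]
    apply Finset.sum_congr rfl
    intro j _
    simp only [hg'def, dif_pos j.isLt]
  rw [hsum1, hsum2, hq1, hq2] at h
  have hf' : ∀ j, j ≤ q1 → f' j < k (r - j) := by
    intro j hj
    simp only [hf'def]
    rw [dif_pos (by omega)]
    exact (f _).isLt
  have hg' : ∀ j, j ≤ q2 → g' j < k (r - j) := by
    intro j hj
    simp only [hg'def]
    rw [dif_pos (by omega)]
    exact (g _).isLt
  obtain ⟨hq, hdig⟩ := aux_eq r k b hk hb1 hrec q1 q2 hq1r hq2r f' g' hf' hg' h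
  have hqq : qf1 = qf2 := Fin.ext (by omega)
  subst hqq
  apply Sigma.ext
  · rfl
  · simp only [heq_eq_eq]
    funext j
    have hjq : j.1 ≤ q1 := by
      have := j.isLt
      omega
    have hthis := hdig j.1 hjq
    simp only [hf'def, hg'def, dif_pos (show j.1 < q1 + 1 by omega),
      dif_pos (show j.1 < q2 + 1 by omega)] at hthis
    exact Fin.ext hthis
end

section
/- Let K = (k_1, ..., k_r) be a sequence of positive integers with place values b_1 = 1, b_{q+1} = 1 + k_q b_q, and let F((i_r, ..., i_{r-q})) = i_r b_r + ... + i_{r-q} b_{r-q} + q on the set R of admissible tuples. Then the range of F is exactly {0, 1, ..., b_{r+1} - 2}. -/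
/-- Lemma 3.2: the range of `F` is exactly `{0, 1, ..., b (r+1) - 2}`. -/
theorem stmt_8 (r : ℕ) (hr : 1 ≤ r) (k b : ℕ → ℕ)
    (hk : ∀ x, 1 ≤ x → x ≤ r → 1 ≤ k x)
    (hb1 : b 1 = 1)
    (hrec : ∀ q, 1 ≤ q → q ≤ r → b (q + 1) = 1 + k q * b q) :
    Set.range
      (fun T : Σ q : Fin r, (∀ j : Fin (q.1 + 1), Fin (k (r - j.1))) =>
        (∑ j : Fin (T.1.1 + 1), (T.2 j).1 * b (r - j.1)) + T.1.1)
      = Set.Iic (b (r + 1) - 2) := by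
  have hbpos : ∀ x, 1 ≤ x → x ≤ r + 1 → 1 ≤ b x := by
    intro x hx1 hxr
    induction x with
    | zero => omega
    | succ y ih =>
      rcases Nat.lt_or_ge 1 (y + 1) with h | h
      · rw [hrec y (by omega) (by omega)]; omega
      · have : y = 0 := by omega
        subst this; simp [hb1]
  have hb2pos : ∀ x, 2 ≤ x → x ≤ r + 1 → 2 ≤ b x := by
    intro x hx2 hxr
    obtain ⟨y, rfl⟩ : ∃ y, x = y + 1 := ⟨x - 1, by omega⟩
    have h1 : 1 ≤ b y := hbpos y (by omega) (by omega)
    have h2 : 1 ≤ k y := hk y (by omega) (by omega)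
    rw [hrec y (by omega) (by omega)]
    nlinarith
  -- upper bound
  have upper : ∀ q s, q < s → s ≤ r → ∀ f : (j : Fin (q + 1)) → Fin (k (s - j.1)),
      (∑ j : Fin (q + 1), (f j).1 * b (s - j.1)) + q ≤ b (s + 1) - 2 := by
    intro q
    induction q with
    | zero =>
      intro s hqs hsr f
      have hks : 1 ≤ k s := hk s (by omega) hsr
      have hf0 : (f 0).1 < k s := by simpa using (f 0).2
      have hbs : 1 ≤ b s := hbpos s (by omega) (by omega)
      have hbs1 : b (s + 1) = 1 + k s * b s := hrec s (by omega) hsr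
      have hsum : (∑ j : Fin 1, (f j).1 * b (s - j.1)) = (f 0).1 * b s := by simp
      rw [hsum]
      have h1 : ((f 0).1 + 1) * b s ≤ k s * b s :=
        Nat.mul_le_mul_right _ (by omega)
      rw [add_mul, one_mul] at h1
      obtain ⟨P, hP⟩ : ∃ P, k s * b s = P := ⟨_, rfl⟩
      rw [hP] at hbs1 h1
      omega
    | succ q ih =>
      intro s hqs hsr f
      have hks : 1 ≤ k s := hk s (by omega) hsr
      have hf0 : (f 0).1 < k s := by simpa using (f 0).2
      have hbs : 2 ≤ b s := hb2pos s (by omega) (by omega)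
      have hbs1 : b (s + 1) = 1 + k s * b s := hrec s (by omega) hsr
      have hg : ∀ j : Fin (q + 1), (f j.succ).1 < k (s - 1 - j.1) := by
        intro j
        exact lt_of_lt_of_le (f j.succ).2
          (le_of_eq (congrArg k (by rw [Fin.val_succ]; omega)))
      have htail := ih (s - 1) (by omega) (by omega) (fun j => ⟨(f j.succ).1, hg j⟩)
      rw [show s - 1 + 1 = s by omega] at htail
      simp only [Fin.val_mk] at htail
      rw [Fin.sum_univ_succ]
      have hsum : (∑ j : Fin (q + 1), (f j.succ).1 * b (s - (j.succ.1)))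
          = ∑ j : Fin (q + 1), (f j.succ).1 * b (s - 1 - j.1) :=
        Finset.sum_congr rfl fun j _ =>
          congrArg (fun x => (f j.succ).1 * b x) (by rw [Fin.val_succ]; omega)
      rw [hsum]
      simp only [Fin.val_zero, Nat.sub_zero]
      have h1 : ((f 0).1 + 1) * b s ≤ k s * b s :=
        Nat.mul_le_mul_right _ (by omega)
      rw [add_mul, one_mul] at h1
      obtain ⟨P, hP⟩ : ∃ P, k s * b s = P := ⟨_, rfl⟩
      rw [hP] at hbs1 h1
      have hPpos : 0 < k s * b s := Nat.mul_pos (by omega) (by omega)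
      rw [hP] at hPpos
      omega
  -- existence
  have exist : ∀ s, 1 ≤ s → s ≤ r → ∀ n, n ≤ b (s + 1) - 2 →
      ∃ q : ℕ, ∃ hq : q < s, ∃ f : (j : Fin (q + 1)) → Fin (k (s - j.1)),
        n = (∑ j : Fin (q + 1), (f j).1 * b (s - j.1)) + q := by
    intro s
    induction s with
    | zero => omega
    | succ t iht =>
      intro hs1 hsr n hn
      have hbt1 : 1 ≤ b (t + 1) := hbpos _ (by omega) (by omega)
      have hbs1 : b (t + 1 + 1) = 1 + k (t + 1) * b (t + 1) := hrec (t + 1) (by omega) hsr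
      have hkt : 1 ≤ k (t + 1) := hk (t + 1) (by omega) hsr
      have hi : n / b (t + 1) < k (t + 1) := by
        apply Nat.div_lt_of_lt_mul
        have hco : b (t + 1) * k (t + 1) = k (t + 1) * b (t + 1) := Nat.mul_comm _ _
        have hPpos : 0 < k (t + 1) * b (t + 1) := Nat.mul_pos (by omega) (by omega)
        obtain ⟨P, hP⟩ : ∃ P, k (t + 1) * b (t + 1) = P := ⟨_, rfl⟩
        rw [hP] at hbs1 hco hPpos
        rw [hco]
        omega
      have hdm := Nat.div_add_mod n (b (t + 1))
      have hco2 : b (t + 1) * (n / b (t + 1)) = n / b (t + 1) * b (t + 1) :=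
        Nat.mul_comm _ _
      rcases Nat.eq_zero_or_pos (n % b (t + 1)) with h0 | h0
      · refine ⟨0, by omega, fun j => ⟨n / b (t + 1), ?_⟩, ?_⟩
        · rwa [show t + 1 - j.1 = t + 1 by omega]
        · rw [Fin.sum_univ_succ]
          simp only [Finset.univ_eq_empty, Finset.sum_empty, Fin.val_zero,
            Nat.sub_zero, Nat.add_zero]
          omega
      · have ht1 : 1 ≤ t := by
          by_contra h
          have ht0 : t = 0 := by omega
          subst ht0
          rw [hb1] at h0
          simp [Nat.mod_one] at h0
        have hm : n % b (t + 1) - 1 ≤ b (t + 1) - 2 := by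
          have := Nat.mod_lt n (show 0 < b (t + 1) by omega)
          omega
        obtain ⟨q, hq, f, hf⟩ := iht (by omega) (by omega) (n % b (t + 1) - 1) hm
        have hFbound : ∀ j : Fin (q + 2),
            (if j.1 = 0 then n / b (t + 1) else (f ⟨j.1 - 1, by omega⟩).1)
              < k (t + 1 - j.1) := by
          intro j
          rcases Nat.eq_zero_or_pos j.1 with h | h
          · rw [if_pos h, show t + 1 - j.1 = t + 1 by omega]; exact hi
          · rw [if_neg (by omega), show t + 1 - j.1 = t - (j.1 - 1) by omega]
            exact (f ⟨j.1 - 1, by omega⟩).2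
        refine ⟨q + 1, by omega,
          fun j => ⟨if j.1 = 0 then n / b (t + 1) else (f ⟨j.1 - 1, by omega⟩).1,
            hFbound j⟩, ?_⟩
        rw [Fin.sum_univ_succ]
        have hsum : (∑ j : Fin (q + 1),
            ((⟨if (j.succ : Fin (q + 2)).1 = 0 then n / b (t + 1)
                else (f ⟨(j.succ : Fin (q + 2)).1 - 1, by omega⟩).1,
              hFbound j.succ⟩ : Fin (k (t + 1 - (j.succ : Fin (q + 2)).1))).1
              * b (t + 1 - (j.succ : Fin (q + 2)).1)))
            = ∑ j : Fin (q + 1), (f j).1 * b (t - j.1) := by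
          refine Finset.sum_congr rfl fun j _ => ?_
          have hne : (j.succ : Fin (q + 2)).1 ≠ 0 := by
            rw [Fin.val_succ]; omega
          have hidx : t + 1 - (j.succ : Fin (q + 2)).1 = t - j.1 := by
            rw [Fin.val_succ]; omega
          simp only [if_neg hne]
          rw [hidx]
          congr 2
        rw [hsum]
        simp only [Fin.val_zero, Nat.sub_zero, if_true, eq_self_iff_true, ite_true]
        omega
  apply Set.eq_of_subset_of_subset
  · rw [Set.range_subset_iff]
    intro T
    simpa using upper T.1.1 r T.1.2 le_rfl T.2
  · intro n hn
    obtain ⟨q, hq, f, hf⟩ := exist r hr le_rfl n (Set.mem_Iic.mp hn)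
    exact ⟨⟨⟨q, hq⟩, f⟩, hf.symm⟩
end

section
/- Let K = (k_1, ..., k_r) be a sequence of positive integers with place values b_1 = 1, b_{q+1} = 1 + k_q b_q. For an admissible tuple (i_r, ..., i_{r-q}) with m = i_r b_r + ... + i_{r-q} b_{r-q} + q, the quotient of m upon division by b_r equals i_r, and the remainder equals i_{r-1} b_{r-1} + ... + i_{r-q} b_{r-q} + q. -/
/-- First step of the Distance Sensitive Division Algorithm: dividing
`m = i_r b_r + ⋯ + i_{r-q} b_{r-q} + q` by `b r` gives quotient `i r` and
remainder `i_{r-1} b_{r-1} + ⋯ + i_{r-q} b_{r-q} + q`. -/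
theorem stmt_11 (r : ℕ) (hr : 1 ≤ r) (k b : ℕ → ℕ)
    (hk : ∀ x, 1 ≤ x → x ≤ r → 1 ≤ k x)
    (hb1 : b 1 = 1)
    (hrec : ∀ q, 1 ≤ q → q ≤ r → b (q + 1) = 1 + k q * b q) :
    ∀ q, q ≤ r - 1 → ∀ i : ℕ → ℕ,
      (∀ x, r - q ≤ x → x ≤ r → i x ≤ k x - 1) →
      ((∑ x ∈ Finset.Icc (r - q) r, i x * b x) + q) / b r = i r ∧
      ((∑ x ∈ Finset.Icc (r - q) r, i x * b x) + q) % b r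
        = (∑ x ∈ Finset.Icc (r - q) (r - 1), i x * b x) + q := by
  intro q hq i hi
  set s := r - q with hs
  have hs1 : 1 ≤ s := by omega
  have hsr : s ≤ r := by omega
  -- telescoping identity
  have key : ∀ t, s ≤ t → t ≤ r →
      b t = b s + ∑ x ∈ Finset.Ico s t, ((k x - 1) * b x + 1) := by
    intro t hst htr
    induction t, hst using Nat.le_induction with
    | base => simp
    | succ t hst ih =>
      have htr' : t ≤ r := by omega
      have hkt : 1 ≤ k t := hk t (by omega) htr'
      have := hrec t (by omega) htr'
      rw [Finset.sum_Ico_succ_top hst, ← add_assoc, ← ih htr', this]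
      have : (k t - 1) * b t = k t * b t - b t := by
        rw [Nat.sub_mul, one_mul]
      rw [this]
      have : b t ≤ k t * b t := Nat.le_mul_of_pos_left _ hkt
      omega
  have hbr := key r hsr le_rfl
  have hcard : (Finset.Ico s r).card = q := by
    simp [Nat.card_Ico]; omega
  have hbs : 1 ≤ b s := by
    -- b is positive on [1, r]
    have : ∀ t, 1 ≤ t → t ≤ r → 1 ≤ b t := by
      intro t h1 h2
      induction t with
      | zero => omega
      | succ n ih =>
        rcases Nat.eq_or_lt_of_le h1 with h | h
        · simp [← h, hb1]
        · rw [hrec n (by omega) (by omega)]; omega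
    exact this s hs1 hsr
  -- remainder bound
  have hR : (∑ x ∈ Finset.Icc s (r - 1), i x * b x) + q < b r := by
    have hIcc : Finset.Icc s (r - 1) = Finset.Ico s r := by
      rw [← Finset.Ico_add_one_right_eq_Icc]
      congr 1
      omega
    have hle : (∑ x ∈ Finset.Ico s r, i x * b x)
        ≤ ∑ x ∈ Finset.Ico s r, (k x - 1) * b x := by
      apply Finset.sum_le_sum
      intro x hx
      simp only [Finset.mem_Ico] at hx
      exact Nat.mul_le_mul_right _ (hi x hx.1 (by omega))
    have hsum : ∑ x ∈ Finset.Ico s r, ((k x - 1) * b x + 1)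
        = (∑ x ∈ Finset.Ico s r, (k x - 1) * b x) + q := by
      rw [Finset.sum_add_distrib, Finset.sum_const, hcard, smul_eq_mul, mul_one]
    rw [hIcc]
    omega
  -- split top term of the sum
  have hsplit : (∑ x ∈ Finset.Icc s r, i x * b x)
      = (∑ x ∈ Finset.Icc s (r - 1), i x * b x) + i r * b r := by
    have : r = (r - 1) + 1 := by omega
    rw [this, Finset.sum_Icc_succ_top (by omega)]
    congr 2
  have hbrpos : 0 < b r := by omega
  set R := (∑ x ∈ Finset.Icc s (r - 1), i x * b x) + q with hRdef
  have hm : (∑ x ∈ Finset.Icc s r, i x * b x) + q = R + i r * b r := by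
    rw [hsplit]; ring
  rw [hm]
  constructor
  · rw [Nat.add_mul_div_right _ _ hbrpos, Nat.div_eq_of_lt hR, zero_add]
  · rw [Nat.add_mul_mod_self_right, Nat.mod_eq_of_lt hR]
end
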